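/- Monk's formula: for the simple transposition $s_k \in S_n$ and any $w \in S_\infty$, $\mathfrak{S}_{s_k}\cdot \mathfrak{S}_w = \sum_t \mathfrak{S}_{wt}$ in $\mathbb{Z}[X_1,X_2,\ldots]$, summed over all transpositions $t = (i,j)$ with $i \le k < j$ and $l(wt) = l(w)+1$. Here $\mathfrak{S}_{s_k} = X_1 + \cdots + X_k$. -/

import Mathlib

open MvPolynomial Finset

noncomputable section

/-- The length (number of inversions) of a permutation of `ℕ`. -/
def permLength (w : Equiv.Perm ℕ) : ℕ :=
  Nat.card {p : ℕ × ℕ // p.1 < p.2 ∧ w p.2 < w p.1}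

/-- `w` belongs to `S_n` (0-indexed): it fixes every `i ≥ n`. -/
def memSn (n : ℕ) (w : Equiv.Perm ℕ) : Prop :=
  ∀ i, n ≤ i → w i = i

/-- `w` belongs to `S_∞`: it fixes all but finitely many points. -/
def finSupp (w : Equiv.Perm ℕ) : Prop :=
  ∃ n, memSn n w

/-- The longest element of `S_n`: `i ↦ n - 1 - i` on `{0, …, n-1}`, identity elsewhere. -/
def w0 (n : ℕ) : Equiv.Perm ℕ :=
  Function.Involutive.toPerm (fun i => if i < n then n - 1 - i else i)
    (by intro i; dsimp only; split_ifs <;> omega)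

/-- The staircase monomial `X_0^{n-1} X_1^{n-2} ⋯ X_{n-2}`. -/
def staircase (n : ℕ) : MvPolynomial ℕ ℤ :=
  ∏ i ∈ Finset.range n, X i ^ (n - 1 - i)

/-- Divided difference operators and Schubert polynomials, packaged with their defining
properties: `D i` is the divided difference `∂_i f = (f - s_i f)/(X_i - X_{i+1})`,
`Dw` is `∂_w` (defined through reduced words), and the Schubert polynomial is
`𝔖_w = ∂_{w⁻¹ w₀} (X_0^{n-1} X_1^{n-2} ⋯)` for `w ∈ S_n` (compatibly with the
inclusions `S_n ⊆ S_{n+1}`). -/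
structure SchubertData where
  D : ℕ → MvPolynomial ℕ ℤ → MvPolynomial ℕ ℤ
  hD : ∀ i f, (X i - X (i + 1)) * D i f = f - rename (⇑(Equiv.swap i (i + 1))) f
  Dw : Equiv.Perm ℕ → MvPolynomial ℕ ℤ → MvPolynomial ℕ ℤ
  Dw_one : Dw 1 = id
  Dw_step : ∀ w i, permLength (w * Equiv.swap i (i + 1)) = permLength w + 1 →
    Dw (w * Equiv.swap i (i + 1)) = Dw w ∘ D i
  S : Equiv.Perm ℕ → MvPolynomial ℕ ℤ
  hS : ∀ n w, memSn n w → S w = Dw (w⁻¹ * w0 n) (staircase n)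

/-- The `k`-th elementary symmetric polynomial in the variables `X_0, …, X_{n-1}`. -/
def esymmN (n k : ℕ) : MvPolynomial ℕ ℤ :=
  ∑ s ∈ Finset.powersetCard k (Finset.range n), ∏ i ∈ s, X i

/-- The ideal `I_n = ⟨e_1, …, e_n⟩` of `ℤ[X_0, X_1, …]`. -/
def In (n : ℕ) : Ideal (MvPolynomial ℕ ℤ) :=
  Ideal.span {p | ∃ k, 1 ≤ k ∧ k ≤ n ∧ p = esymmN n k}

/-- The embedding of `S_n = Perm (Fin n)` into `Perm ℕ`. -/
def embedPerm (n : ℕ) (u : Equiv.Perm (Fin n)) : Equiv.Perm ℕ :=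
  u.extendDomain Fin.equivSubtype

/-!
For `w ∈ S_n` and `m < n`, the transition formula `x_m 𝔖_w = ∑ ± 𝔖_{w (m c)}` holds, summed
over the covers `w ⋖ w (m c)` in the Bruhat order, with sign `+` for `c > m` and `-` for `c < m`.
It is proved by descending induction on `l(w)`. At `w = w₀` the only cover is `c = n`, and
`𝔖_{w₀ (m n)} = x_m x^δ` is a direct computation with divided differences of monomials.
If `w r < w (r + 1)`, applying `∂_r` to the formula for `w s_r` at `s_r m` gives the one for `w`
at `m`: `∂_r 𝔖_u` is `𝔖_{u s_r}` or `0` according as `u` has a descent at `r` or not, and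
conjugation by `s_r` matches the covers of `w s_r` with a descent at `r` to the covers of `w`.
For `w = 1` the formula gives `𝔖_{s_k} = x_0 + ⋯ + x_k`; summing it over `m ≤ k`, the terms with
both ends of the transposition `≤ k` cancel in pairs, which leaves Monk's formula.
-/

open Equiv

section Permutations

variable {n : ℕ} {u v w : Perm ℕ}

theorem memSn.mono {n' : ℕ} (hw : memSn n w) (h : n ≤ n') : memSn n' w :=
  fun i hi => hw i (h.trans hi)

theorem memSn.mul (hu : memSn n u) (hv : memSn n v) : memSn n (u * v) := fun i hi => by
  rw [Perm.mul_apply, hv i hi, hu i hi]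

theorem memSn_swap {i j : ℕ} (hi : i < n) (hj : j < n) : memSn n (swap i j) :=
  fun _ _ => swap_apply_of_ne_of_ne (by omega) (by omega)

theorem memSn.apply_lt (hw : memSn n w) {i : ℕ} (hi : i < n) : w i < n := by
  by_contra h
  have := w.injective (hw _ (not_lt.mp h))
  omega

theorem memSn.inv (hw : memSn n w) : memSn n w⁻¹ := fun i hi => by
  rw [Perm.inv_eq_iff_eq, hw i hi]

theorem w0_apply (n i : ℕ) : w0 n i = if i < n then n - 1 - i else i := rfl

theorem memSn_w0 (n : ℕ) : memSn n (w0 n) := fun _ hi => if_neg (by omega)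

theorem w0_inv (n : ℕ) : (w0 n)⁻¹ = w0 n :=
  Function.Involutive.toPerm_symm _

theorem finSupp.exists_memSn_lt (hw : finSupp w) (i : ℕ) : ∃ n, memSn n w ∧ i < n := by
  obtain ⟨n, hn⟩ := hw
  exact ⟨max n (i + 1), hn.mono (le_max_left _ _), by omega⟩

theorem finSupp.mul (hu : finSupp u) (hv : finSupp v) : finSupp (u * v) := by
  obtain ⟨n, hn⟩ := hu
  obtain ⟨m, hm⟩ := hv
  exact ⟨max n m, (hn.mono (le_max_left _ _)).mul (hm.mono (le_max_right _ _))⟩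

theorem finSupp_swap (i j : ℕ) : finSupp (swap i j) :=
  ⟨max i j + 1, memSn_swap (by omega) (by omega)⟩

theorem finSupp.mul_swap (hw : finSupp w) (i j : ℕ) : finSupp (w * swap i j) :=
  hw.mul (finSupp_swap i j)

theorem finSupp.inv (hw : finSupp w) : finSupp w⁻¹ :=
  let ⟨n, hn⟩ := hw; ⟨n, hn.inv⟩

def inversions (n : ℕ) (w : Perm ℕ) : Finset (ℕ × ℕ) :=
  (range n ×ˢ range n).filter fun p => p.1 < p.2 ∧ w p.2 < w p.1

theorem mem_inversions (hw : memSn n w) {p : ℕ × ℕ} :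
    p ∈ inversions n w ↔ p.1 < p.2 ∧ w p.2 < w p.1 := by
  simp only [inversions, mem_filter, mem_product, mem_range, and_iff_right_iff_imp]
  rintro ⟨h12, hw21⟩
  have h2 : p.2 < n := by
    by_contra h2
    rw [hw _ (not_lt.mp h2)] at hw21
    by_cases h1 : p.1 < n
    · have := hw.apply_lt h1
      omega
    · rw [hw _ (not_lt.mp h1)] at hw21
      omega
  omega

theorem permLength_eq_card_inversions (hw : memSn n w) :
    permLength w = (inversions n w).card := by
  rw [permLength, ← Set.ncard_coe_finset, ← Nat.card_coe_set_eq]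
  exact Nat.card_congr (Equiv.subtypeEquivRight fun _ => (mem_inversions hw).symm)

theorem permLength_le (hw : memSn n w) : permLength w ≤ n * n := by
  rw [permLength_eq_card_inversions hw]
  exact (card_filter_le _ _).trans (by simp)

theorem permLength_one : permLength (1 : Perm ℕ) = 0 := by
  rw [permLength_eq_card_inversions (n := 0) fun _ _ => rfl]
  rfl

theorem permLength_inv (hw : finSupp w) : permLength w⁻¹ = permLength w := by
  obtain ⟨n, hn⟩ := hw
  rw [permLength_eq_card_inversions hn.inv, permLength_eq_card_inversions hn]
  refine card_bij' (fun p _ => (w⁻¹ p.2, w⁻¹ p.1)) (fun p _ => (w p.2, w p.1)) ?_ ?_ ?_ ?_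
  all_goals
    intro p hp
    simp_all [mem_inversions, hn.inv]

theorem inversions_mul_swap_succ (hw : memSn n w) {r : ℕ} (hr : r + 1 < n)
    (hlt : w r < w (r + 1)) :
    inversions n (w * swap r (r + 1)) =
      insert (r, r + 1)
        ((inversions n w).map ((swap r (r + 1)).prodCongr (swap r (r + 1))).toEmbedding) := by
  ext p
  rw [mem_insert, mem_map_equiv, mem_inversions (hw.mul (memSn_swap (by omega) hr)),
    mem_inversions hw]
  obtain ⟨a, b⟩ := p
  simp only [Perm.mul_apply, prodCongr_symm, prodCongr_apply, symm_swap, Prod.map, Prod.mk.injEq,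
    swap_apply_def]
  split_ifs <;> omega

theorem permLength_mul_swap_succ_of_lt (hw : finSupp w) {r : ℕ} (hlt : w r < w (r + 1)) :
    permLength (w * swap r (r + 1)) = permLength w + 1 := by
  obtain ⟨n, hn, hr⟩ := hw.exists_memSn_lt (r + 1)
  rw [permLength_eq_card_inversions (hn.mul (memSn_swap (by omega) hr)),
    permLength_eq_card_inversions hn, inversions_mul_swap_succ hn hr hlt, card_insert_of_notMem,
    card_map]
  rw [mem_map_equiv, mem_inversions hn]
  simp

theorem permLength_mul_swap_succ_of_gt (hw : finSupp w) {r : ℕ} (hgt : w (r + 1) < w r) :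
    permLength (w * swap r (r + 1)) + 1 = permLength w := by
  have := permLength_mul_swap_succ_of_lt (hw.mul_swap r (r + 1)) (r := r)
    (by simpa [swap_apply_left, swap_apply_right] using hgt)
  rwa [mul_swap_mul_self, eq_comm] at this

theorem permLength_mul_swap_succ_le (hw : finSupp w) (r : ℕ) :
    permLength (w * swap r (r + 1)) ≤ permLength w + 1 := by
  rcases lt_or_gt_of_ne (w.injective.ne (Nat.ne_add_one r)) with h | h
  · exact (permLength_mul_swap_succ_of_lt hw h).le
  · have := permLength_mul_swap_succ_of_gt hw h
    omega

theorem permLength_swap_succ_mul (hw : finSupp w) (r : ℕ) :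
    permLength (swap r (r + 1) * w) = permLength (w⁻¹ * swap r (r + 1)) := by
  rw [← permLength_inv ((finSupp_swap r (r + 1)).mul hw), mul_inv_rev, swap_inv]

theorem permLength_swap_succ_mul_le (hw : finSupp w) (r : ℕ) :
    permLength (swap r (r + 1) * w) ≤ permLength w + 1 := by
  rw [permLength_swap_succ_mul hw, ← permLength_inv hw]
  exact permLength_mul_swap_succ_le hw.inv r

theorem permLength_swap_succ_mul_of_lt (hw : finSupp w) {r : ℕ} (hlt : w⁻¹ r < w⁻¹ (r + 1)) :
    permLength (swap r (r + 1) * w) = permLength w + 1 := by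
  rw [permLength_swap_succ_mul hw, ← permLength_inv hw]
  exact permLength_mul_swap_succ_of_lt hw.inv hlt

theorem permLength_swap_succ_mul_of_gt (hw : finSupp w) {r : ℕ} (hgt : w⁻¹ (r + 1) < w⁻¹ r) :
    permLength (swap r (r + 1) * w) + 1 = permLength w := by
  rw [permLength_swap_succ_mul hw, ← permLength_inv hw]
  exact permLength_mul_swap_succ_of_gt hw.inv hgt

theorem eq_one_of_strictMono (h : StrictMono w) : w = 1 := by
  ext i
  exact DFunLike.congr_fun
    (Subsingleton.elim (h.orderIsoOfSurjective w w.surjective) (OrderIso.refl ℕ)) i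

theorem exists_apply_succ_lt_of_ne_one (hw : w ≠ 1) : ∃ i, w (i + 1) < w i := by
  by_contra! h
  exact hw (eq_one_of_strictMono (strictMono_nat_of_lt_succ fun i =>
    (h i).lt_of_ne (w.injective.ne (Nat.ne_add_one i))))

theorem exists_apply_lt_apply_succ_of_ne_w0 (hw : memSn n w) (hne : w ≠ w0 n) :
    ∃ r, r + 1 < n ∧ w r < w (r + 1) := by
  by_contra! h
  have hmono : StrictMono (w0 n * w) := strictMono_nat_of_lt_succ fun i => by
    simp only [Perm.mul_apply, w0_apply]
    rcases lt_trichotomy (i + 1) n with hi | hi | hi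
    · have := (h i hi).lt_of_ne (w.injective.ne (Nat.ne_add_one i).symm)
      have hwi := hw.apply_lt (by omega : i < n)
      rw [if_pos hwi, if_pos (hw.apply_lt hi)]
      omega
    · have := hw.apply_lt (show i < n by omega)
      rw [hw (i + 1) hi.ge]
      split_ifs <;> omega
    · rw [hw i (by omega), hw (i + 1) (by omega)]
      split_ifs <;> omega
  rw [eq_inv_of_mul_eq_one_right (eq_one_of_strictMono hmono), w0_inv] at hne
  exact hne rfl

def numBetween (w : Perm ℕ) (i j : ℕ) : ℕ :=
  ((Ioo i j).filter fun a => w i < w a ∧ w a < w j).card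

theorem numBetween_eq_zero_iff {i j : ℕ} :
    numBetween w i j = 0 ↔ ∀ a, i < a → a < j → ¬(w i < w a ∧ w a < w j) := by
  simp [numBetween, filter_eq_empty_iff]

theorem numBetween_mul_swap_succ {i j : ℕ} (hij : i < j) :
    numBetween w i (j + 1) = numBetween (w * swap j (j + 1)) i j +
      if w i < w j ∧ w j < w (j + 1) then 1 else 0 := by
  have hIoo : Ioo i (j + 1) = insert j (Ioo i j) := by
    ext a
    simp only [mem_Ioo, mem_insert]
    omega
  have hfilter : (Ioo i j).filter (fun a => (w * swap j (j + 1)) i < (w * swap j (j + 1)) a ∧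
      (w * swap j (j + 1)) a < (w * swap j (j + 1)) j) =
      (Ioo i j).filter (fun a => w i < w a ∧ w a < w (j + 1)) := by
    refine filter_congr fun a ha => ?_
    rw [mem_Ioo] at ha
    simp only [Perm.mul_apply, swap_apply_left, swap_apply_of_ne_of_ne (Nat.ne_of_lt hij)
      (by omega : i ≠ j + 1), swap_apply_of_ne_of_ne (Nat.ne_of_lt ha.2) (by omega : a ≠ j + 1)]
  rw [numBetween, numBetween, hIoo, filter_insert, hfilter]
  split_ifs with h
  · rw [card_insert_of_notMem (by simp)]
  · rfl

/-- Each `a` counted by `numBetween w i j` adds the two inversions `(i, a)` and `(a, j)`. -/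
theorem permLength_mul_swap_of_lt (hw : finSupp w) {i j : ℕ} (hij : i < j) (hlt : w i < w j) :
    permLength (w * swap i j) = permLength w + 1 + 2 * numBetween w i j := by
  induction j, hij using Nat.le_induction generalizing w with
  | base =>
    have : numBetween w i (i + 1) = 0 := numBetween_eq_zero_iff.mpr fun a _ _ => by omega
    rw [permLength_mul_swap_succ_of_lt hw hlt, this]
  | succ j hij IH =>
    have hconj : w * swap i (j + 1) = w * swap j (j + 1) * swap i j * swap j (j + 1) := by
      have : swap j (j + 1) * swap i j * swap j (j + 1) = swap i (j + 1) := by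
        rw [swap_mul_swap_mul_swap (by omega) (by omega), swap_comm]
      simp only [← this, mul_assoc]
    have hi : (w * swap j (j + 1)) i = w i := by
      rw [Perm.mul_apply, swap_apply_of_ne_of_ne (by omega : i ≠ j) (by omega : i ≠ j + 1)]
    have hj : (w * swap j (j + 1)) j = w (j + 1) := by simp
    have hj' : (w * swap j (j + 1) * swap i j) (j + 1) = w j := by
      simp [swap_apply_of_ne_of_ne (by omega : j + 1 ≠ i) (by omega : j + 1 ≠ j)]
    have hj'' : (w * swap j (j + 1) * swap i j) j = w i := by
      rw [Perm.mul_apply, swap_apply_right, hi]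
    have hIH := IH (hw.mul_swap _ _) (by rwa [hi, hj])
    have hne₁ : w j ≠ w i := w.injective.ne (by omega)
    have hne₂ : w j ≠ w (j + 1) := w.injective.ne (by omega)
    rw [hconj, numBetween_mul_swap_succ (by omega : i < j)]
    rcases lt_or_gt_of_ne hne₂ with h₂ | h₂
    · have hl := permLength_mul_swap_succ_of_lt hw h₂
      rcases lt_or_gt_of_ne hne₁ with h₁ | h₁
      · have := permLength_mul_swap_succ_of_gt ((hw.mul_swap _ _).mul_swap i j) (r := j)
          (by rwa [hj', hj''])
        rw [if_neg (by omega)]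
        omega
      · have := permLength_mul_swap_succ_of_lt ((hw.mul_swap _ _).mul_swap i j) (r := j)
          (by rwa [hj', hj''])
        rw [if_pos ⟨h₁, h₂⟩]
        omega
    · have hl := permLength_mul_swap_succ_of_gt hw h₂
      have := permLength_mul_swap_succ_of_lt ((hw.mul_swap _ _).mul_swap i j) (r := j)
        (by rw [hj', hj'']; omega)
      rw [if_neg (by omega)]
      omega

/-- `w ⋖ w (a b)` in the Bruhat order. -/
def BruhatCovers (w : Perm ℕ) (a b : ℕ) : Prop :=
  permLength (w * swap a b) = permLength w + 1

theorem bruhatCovers_iff (hw : finSupp w) {i j : ℕ} (hij : i < j) :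
    BruhatCovers w i j ↔ w i < w j ∧ ∀ a, i < a → a < j → ¬(w i < w a ∧ w a < w j) := by
  rw [← numBetween_eq_zero_iff]
  rcases lt_or_gt_of_ne (w.injective.ne hij.ne) with h | h
  · rw [BruhatCovers, permLength_mul_swap_of_lt hw hij h]
    omega
  · have := permLength_mul_swap_of_lt (hw.mul_swap i j) hij (by simpa using h)
    rw [mul_swap_mul_self] at this
    rw [BruhatCovers]
    omega

theorem BruhatCovers.ne {a b : ℕ} (h : BruhatCovers w a b) : a ≠ b := by
  rintro rfl
  rw [BruhatCovers, swap_self, ← Perm.one_def, mul_one] at h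
  omega

theorem BruhatCovers.le_of_memSn (hw : memSn n w) {m c : ℕ} (hm : m < n)
    (h : BruhatCovers w m c) : c ≤ n := by
  by_contra! hc
  have hcov := ((bruhatCovers_iff ⟨n, hw⟩ (by omega)).mp h).2 n hm (by omega)
  rw [hw n le_rfl, hw c hc.le] at hcov
  exact hcov ⟨hw.apply_lt hm, hc⟩

theorem swap_apply_swap_succ_of_ne {m r : ℕ} (hm : swap r (r + 1) m ≠ m) :
    swap m (swap r (r + 1) m) = swap r (r + 1) := by
  rcases eq_or_ne m r with rfl | h₁
  · rw [swap_apply_left]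
  rcases eq_or_ne m (r + 1) with rfl | h₂
  · rw [swap_apply_right, swap_comm]
  · exact absurd (swap_apply_of_ne_of_ne h₁ h₂) hm

theorem mul_swap_succ_mul_swap_conj (x : Perm ℕ) (r a b : ℕ) :
    x * swap r (r + 1) * swap (swap r (r + 1) a) (swap r (r + 1) b) =
      x * swap a b * swap r (r + 1) := by
  rw [swap_apply_apply, swap_inv, mul_assoc x, ← mul_assoc (swap r (r + 1)),
    ← mul_assoc (swap r (r + 1)), swap_mul_self, one_mul, mul_assoc]

/-- If this failed, the value moved across position `r` or `r + 1` would jump over a value of `w`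
strictly between `w a` and `w b`. -/
theorem BruhatCovers.mul_swap_apply_lt (hw : finSupp w) {r a b : ℕ} (hlt : w r < w (r + 1))
    (hcov : BruhatCovers w a b) (hb : b ≠ swap r (r + 1) a) :
    (w * swap a b) r < (w * swap a b) (r + 1) := by
  wlog hab : a < b generalizing a b
  · rw [swap_comm]
    refine this (by rwa [BruhatCovers, swap_comm]) ?_ (by have := hcov.ne; omega)
    rintro rfl
    exact hb (swap_apply_self _ _ _).symm
  obtain ⟨hab', hno⟩ := (bruhatCovers_iff hw hab).mp hcov
  have hr := hno r
  have hr' := hno (r + 1)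
  have hinj : ∀ x y, x = y ∨ w x ≠ w y := fun x y => (eq_or_ne x y).imp_right w.injective.ne
  have := hinj a r
  have := hinj b (r + 1)
  simp only [Perm.mul_apply, swap_apply_def] at hb ⊢
  split_ifs at hb ⊢ <;> subst_vars <;> omega

theorem bruhatCovers_mul_swap_succ_iff (hw : finSupp w) {r : ℕ} (hlt : w r < w (r + 1))
    {m c : ℕ} :
    BruhatCovers (w * swap r (r + 1)) (swap r (r + 1) m) (swap r (r + 1) c) ∧
      (w * swap r (r + 1) * swap (swap r (r + 1) m) (swap r (r + 1) c)) (r + 1) <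
        (w * swap r (r + 1) * swap (swap r (r + 1) m) (swap r (r + 1) c)) r ↔
      c ≠ swap r (r + 1) m ∧ BruhatCovers w m c := by
  have hasc_iff : ∀ v : Perm ℕ, (v * swap r (r + 1)) (r + 1) < (v * swap r (r + 1)) r ↔
      v r < v (r + 1) := fun v => by simp
  rw [BruhatCovers, BruhatCovers, mul_swap_succ_mul_swap_conj, hasc_iff,
    permLength_mul_swap_succ_of_lt hw hlt]
  constructor
  · rintro ⟨hcov, hasc⟩
    rw [permLength_mul_swap_succ_of_lt (hw.mul_swap m c) hasc, add_left_inj] at hcov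
    refine ⟨?_, hcov⟩
    rintro rfl
    rw [swap_apply_swap_succ_of_ne (BruhatCovers.ne hcov).symm] at hasc
    simp only [Perm.mul_apply, swap_apply_left, swap_apply_right] at hasc
    omega
  · rintro ⟨hc, hcov⟩
    have hasc := BruhatCovers.mul_swap_apply_lt hw hlt hcov hc
    exact ⟨by rw [permLength_mul_swap_succ_of_lt (hw.mul_swap m c) hasc, hcov], hasc⟩

theorem bruhatCovers_one_iff {a b : ℕ} : BruhatCovers 1 a b ↔ b = a + 1 ∨ a = b + 1 := by
  have key : ∀ {a b : ℕ}, a < b → (BruhatCovers 1 a b ↔ b = a + 1) := fun {a b} hab => by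
    rw [bruhatCovers_iff ⟨0, fun _ _ => rfl⟩ hab]
    simp only [Perm.one_apply]
    constructor
    · rintro ⟨-, h⟩
      by_contra hne
      exact h (a + 1) (by omega) (by omega) ⟨by omega, by omega⟩
    · rintro rfl
      exact ⟨by omega, fun x hx hx' => by omega⟩
  rcases lt_trichotomy a b with hab | rfl | hab
  · rw [key hab]
    omega
  · simp only [BruhatCovers, swap_self, ← Perm.one_def, mul_one]
    omega
  · rw [BruhatCovers, swap_comm, ← BruhatCovers, key hab]
    omega

end Permutations

open MvPolynomial

def prodXPow (N : ℕ) (f : ℕ → ℕ) : MvPolynomial ℕ ℤ :=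
  ∏ p ∈ range N, X p ^ f p

section Monomials

variable {N r : ℕ} {f g : ℕ → ℕ}

theorem prodXPow_congr (h : ∀ p < N, f p = g p) : prodXPow N f = prodXPow N g :=
  prod_congr rfl fun p hp => by rw [h p (mem_range.mp hp)]

theorem prodXPow_succ (N : ℕ) (f : ℕ → ℕ) :
    prodXPow (N + 1) f = prodXPow N f * X N ^ f N :=
  prod_range_succ _ _

theorem prodXPow_eq_X_mul (hr : r < N) (hf : f r = g r + 1) (hfg : ∀ p < N, p ≠ r → f p = g p) :
    prodXPow N f = X r * prodXPow N g := by
  have herase : ∏ p ∈ (range N).erase r, (X p : MvPolynomial ℕ ℤ) ^ f p =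
      ∏ p ∈ (range N).erase r, X p ^ g p :=
    prod_congr rfl fun p hp => by
      rw [hfg p (mem_range.mp (mem_of_mem_erase hp)) (ne_of_mem_erase hp)]
  rw [prodXPow, prodXPow, ← mul_prod_erase _ _ (mem_range.mpr hr),
    ← mul_prod_erase _ _ (mem_range.mpr hr), hf, pow_succ, herase]
  ring

theorem rename_swap_succ_prodXPow (hr : r + 1 < N) (hf : f r = f (r + 1)) :
    rename (swap r (r + 1)) (prodXPow N f) = prodXPow N f := by
  have hfs : ∀ p, f (swap r (r + 1) p) = f p := fun p => by
    rw [swap_apply_def]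
    split_ifs <;> subst_vars <;> simp [hf]
  rw [prodXPow, map_prod]
  simp only [map_pow, rename_X]
  calc ∏ p ∈ range N, X (swap r (r + 1) p) ^ f p
      = ∏ p ∈ range N, X (swap r (r + 1) p) ^ f (swap r (r + 1) p) := by simp only [hfs]
    _ = ∏ p ∈ range N, X p ^ f p := Perm.prod_comp _ _ (fun p => X p ^ f p) fun p hp => by
        simp only [Set.mem_ofPred_eq, coe_range, Set.mem_Iio] at hp ⊢
        contrapose! hp
        exact swap_apply_of_ne_of_ne (by omega) (by omega)

end Monomials

def adjCycle (a : ℕ) : ℕ → Perm ℕ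
  | 0 => 1
  | d + 1 => adjCycle a d * swap (a + d) (a + d + 1)

theorem adjCycle_apply (a d x : ℕ) :
    adjCycle a d x = if a ≤ x ∧ x < a + d then x + 1 else if x = a + d then a else x := by
  induction d generalizing x with
  | zero =>
    rw [adjCycle, Perm.one_apply]
    split_ifs <;> omega
  | succ d ih =>
    rw [adjCycle, Perm.mul_apply, ih, swap_apply_def]
    split_ifs <;> omega

theorem finSupp_adjCycle (a d : ℕ) : finSupp (adjCycle a d) :=
  ⟨a + d + 1, fun x hx => by rw [adjCycle_apply, if_neg (by omega), if_neg (by omega)]⟩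

theorem w0_mul_swap_eq (m n : ℕ) (hm : m < n) :
    w0 n * swap m n = w0 (n + 1) * adjCycle 0 m * adjCycle (m + 1) (n - 1 - m) := by
  ext x
  simp only [Perm.mul_apply, adjCycle_apply, w0_apply, swap_apply_def]
  split_ifs <;> omega

def transSign (m c : ℕ) : ℤ :=
  if m < c then 1 else -1

theorem transSign_swap_succ {r m c : ℕ} (hc : c ≠ swap r (r + 1) m) :
    transSign (swap r (r + 1) m) (swap r (r + 1) c) = transSign m c := by
  simp only [transSign, swap_apply_def] at hc ⊢
  split_ifs at hc ⊢ <;> omega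

theorem transSign_comm {a b : ℕ} (h : a ≠ b) : transSign b a = -transSign a b := by
  simp only [transSign]
  split_ifs <;> first | rfl | omega

def IsCoverSet (w : Perm ℕ) (m : ℕ) (C : Finset ℕ) : Prop :=
  ∀ c, c ∈ C ↔ BruhatCovers w m c

theorem exists_isCoverSet {w : Perm ℕ} (hw : finSupp w) (m : ℕ) : ∃ C, IsCoverSet w m C := by
  classical
  obtain ⟨n, hn, hm⟩ := hw.exists_memSn_lt m
  refine ⟨(range (n + 1)).filter (BruhatCovers w m), fun c => ?_⟩
  rw [mem_filter, mem_range, and_iff_right_iff_imp]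
  exact fun h => Nat.lt_succ_of_le (h.le_of_memSn hn hm)

/-- The terms with `c ≤ k` cancel in pairs `(m, c)`, `(c, m)`. -/
theorem sum_range_sum_transSign_smul {M : Type*} [AddCommGroup M] {Q : ℕ → ℕ → Prop}
    (hQ : ∀ a b, Q a b → Q b a) (hQne : ∀ a b, Q a b → a ≠ b) {F : ℕ → ℕ → M}
    (hF : ∀ a b, F a b = F b a) {k : ℕ} {C : ℕ → Finset ℕ} (hC : ∀ m c, c ∈ C m ↔ Q m c)
    {T : Finset (ℕ × ℕ)} (hT : ∀ p : ℕ × ℕ, p ∈ T ↔ p.1 ≤ k ∧ k < p.2 ∧ Q p.1 p.2) :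
    ∑ m ∈ range (k + 1), ∑ c ∈ C m, transSign m c • F m c = ∑ p ∈ T, F p.1 p.2 := by
  classical
  set P := (range (k + 1) ×ˢ (range (k + 1)).biUnion C).filter fun p => p.2 ∈ C p.1
  have hP : ∀ p : ℕ × ℕ, p ∈ P ↔ p.1 ≤ k ∧ Q p.1 p.2 := fun p => by
    simp only [P, mem_filter, mem_product, mem_biUnion, mem_range, hC, Nat.lt_succ_iff]
    exact ⟨fun h => ⟨h.1.1, h.2⟩, fun h => ⟨⟨h.1, p.1, h.1, h.2⟩, h.2⟩⟩
  rw [← sum_finset_product P _ C (f := fun p => transSign p.1 p.2 • F p.1 p.2)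
      fun p => by rw [hP, hC, mem_range, Nat.lt_succ_iff],
    ← sum_filter_add_sum_filter_not P fun p => k < p.2]
  have hhigh : P.filter (fun p => k < p.2) = T := by
    ext p
    rw [mem_filter, hP, hT]
    tauto
  have hlow : ∑ p ∈ P.filter (fun p => ¬k < p.2), transSign p.1 p.2 • F p.1 p.2 = 0 := by
    refine sum_involution (fun p _ => p.swap) (fun p hp => ?_) (fun p hp _ => ?_) (fun p hp => ?_)
      fun p _ => rfl
    · have hne := hQne _ _ ((hP p).mp (mem_filter.mp hp).1).2
      rw [Prod.fst_swap, Prod.snd_swap, transSign_comm hne, hF p.2, neg_smul, add_neg_cancel]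
    · have hne := hQne _ _ ((hP p).mp (mem_filter.mp hp).1).2
      exact fun h => hne (congrArg Prod.snd h)
    · rw [mem_filter, hP] at hp ⊢
      simp only [Prod.fst_swap, Prod.snd_swap]
      exact ⟨⟨by omega, hQ _ _ hp.1.2⟩, by omega⟩
  rw [hhigh, hlow, add_zero]
  refine sum_congr rfl fun p hp => ?_
  rw [transSign, if_pos (by have := (hT p).mp hp; omega), one_smul]

namespace SchubertData

variable (SD : SchubertData) {n m r : ℕ} {u v w : Perm ℕ}

theorem X_sub_X_succ_ne_zero (r : ℕ) : (X r - X (r + 1) : MvPolynomial ℕ ℤ) ≠ 0 :=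
  sub_ne_zero.mpr fun h => by have := X_injective h; omega

theorem D_eq_of_mul_eq {f g : MvPolynomial ℕ ℤ}
    (h : (X r - X (r + 1)) * g = f - rename (swap r (r + 1)) f) : SD.D r f = g :=
  mul_left_cancel₀ (X_sub_X_succ_ne_zero r) ((SD.hD r f).trans h.symm)

theorem D_sum {ι : Type*} (s : Finset ι) (f : ι → MvPolynomial ℕ ℤ) :
    SD.D r (∑ i ∈ s, f i) = ∑ i ∈ s, SD.D r (f i) :=
  SD.D_eq_of_mul_eq <| by simp only [mul_sum, SD.hD, map_sum, sum_sub_distrib]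

theorem D_zsmul (z : ℤ) (f : MvPolynomial ℕ ℤ) : SD.D r (z • f) = z • SD.D r f :=
  SD.D_eq_of_mul_eq <| by rw [mul_smul_comm, SD.hD, map_zsmul, smul_sub]

theorem D_mul (f g : MvPolynomial ℕ ℤ) :
    SD.D r (f * g) = SD.D r f * g + rename (swap r (r + 1)) f * SD.D r g :=
  SD.D_eq_of_mul_eq <| by
    rw [mul_add, ← mul_assoc, SD.hD, mul_left_comm, SD.hD, map_mul]
    ring

theorem D_eq_zero_of_rename_eq {f : MvPolynomial ℕ ℤ}
    (h : rename (swap r (r + 1)) f = f) : SD.D r f = 0 :=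
  SD.D_eq_of_mul_eq <| by rw [h, sub_self, mul_zero]

theorem rename_D (f : MvPolynomial ℕ ℤ) :
    rename (swap r (r + 1)) (SD.D r f) = SD.D r f := by
  have h := congrArg (rename (swap r (r + 1))) (SD.hD r f)
  rw [map_mul, map_sub, map_sub, rename_X, rename_X, swap_apply_left, swap_apply_right,
    rename_rename, ← Perm.coe_mul, swap_mul_self, Perm.coe_one, rename_id_apply] at h
  exact (SD.D_eq_of_mul_eq (by linear_combination -h)).symm

theorem D_D (f : MvPolynomial ℕ ℤ) : SD.D r (SD.D r f) = 0 :=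
  SD.D_eq_zero_of_rename_eq (SD.rename_D f)

theorem D_X_self : SD.D r (X r) = 1 :=
  SD.D_eq_of_mul_eq <| by rw [rename_X, swap_apply_left, mul_one]

theorem D_X_succ : SD.D r (X (r + 1)) = -1 :=
  SD.D_eq_of_mul_eq <| by rw [rename_X, swap_apply_right]; ring

theorem D_X_of_ne {a : ℕ} (h₁ : a ≠ r) (h₂ : a ≠ r + 1) : SD.D r (X a) = 0 :=
  SD.D_eq_zero_of_rename_eq <| by rw [rename_X, swap_apply_of_ne_of_ne h₁ h₂]

/-- The left-hand counterpart of `Dw_step`: peel a right descent off `v` and use `Dw_step` on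
both sides. -/
theorem Dw_swap_succ_mul (hv : finSupp v)
    (hlen : permLength (swap r (r + 1) * v) = permLength v + 1) :
    SD.Dw (swap r (r + 1) * v) = SD.D r ∘ SD.Dw v := by
  induction hl : permLength v generalizing v with
  | zero =>
    obtain rfl : v = 1 := by
      by_contra hne
      obtain ⟨i, hi⟩ := exists_apply_succ_lt_of_ne_one hne
      have := permLength_mul_swap_succ_of_gt hv hi
      omega
    have := SD.Dw_step 1 r (by simpa using hlen)
    rw [one_mul] at this
    rw [mul_one, this, SD.Dw_one]
    rfl
  | succ L IH =>
    obtain ⟨i, hi⟩ := exists_apply_succ_lt_of_ne_one (w := v) (by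
      rintro rfl
      rw [permLength_one] at hl
      omega)
    obtain ⟨v', rfl⟩ : ∃ v', v = v' * swap i (i + 1) :=
      ⟨v * swap i (i + 1), (mul_swap_mul_self _ _ _).symm⟩
    have hv' : finSupp v' := by simpa using hv.mul_swap i (i + 1)
    have hlv' : permLength v' + 1 = permLength (v' * swap i (i + 1)) := by
      simpa using permLength_mul_swap_succ_of_gt hv hi
    have hlrv' : permLength (swap r (r + 1) * v') = permLength v' + 1 := by
      have h₁ := permLength_swap_succ_mul_le hv' r
      have h₂ := permLength_mul_swap_succ_le ((finSupp_swap r (r + 1)).mul hv') i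
      rw [mul_assoc] at h₂
      omega
    calc SD.Dw (swap r (r + 1) * (v' * swap i (i + 1)))
        = SD.Dw (swap r (r + 1) * v' * swap i (i + 1)) := by rw [mul_assoc]
      _ = SD.D r ∘ (SD.Dw v' ∘ SD.D i) := by
          rw [SD.Dw_step _ i (by rw [mul_assoc, hlen]; omega), IH hv' hlrv' (by omega)]
          rfl
      _ = SD.D r ∘ SD.Dw (v' * swap i (i + 1)) := by rw [SD.Dw_step v' i (by omega)]

theorem S_one : SD.S 1 = 1 := by
  rw [SD.hS 0 1 fun _ _ => rfl, inv_one, one_mul, show w0 0 = 1 from Perm.ext fun _ => rfl,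
    SD.Dw_one]
  rfl

theorem S_w0 (n : ℕ) : SD.S (w0 n) = staircase n := by
  rw [SD.hS n _ (memSn_w0 n), inv_mul_cancel, SD.Dw_one, id]

theorem inv_mul_w0_inv_apply (hu : memSn n u) {x : ℕ} (hx : x < n) :
    (u⁻¹ * w0 n)⁻¹ x = n - 1 - u x := by
  rw [mul_inv_rev, inv_inv, w0_inv, Perm.mul_apply, w0_apply, if_pos (hu.apply_lt hx)]

theorem D_S_of_gt (hu : finSupp u) (hgt : u (r + 1) < u r) :
    SD.D r (SD.S u) = SD.S (u * swap r (r + 1)) := by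
  obtain ⟨n, hn, hr⟩ := hu.exists_memSn_lt (r + 1)
  have hv : finSupp (u⁻¹ * w0 n) := (finSupp.inv ⟨n, hn⟩).mul ⟨n, memSn_w0 n⟩
  have hlen := permLength_swap_succ_mul_of_lt hv (r := r) <| by
    rw [inv_mul_w0_inv_apply hn (by omega : r < n), inv_mul_w0_inv_apply hn hr]
    have := hn.apply_lt (by omega : r < n)
    omega
  rw [SD.hS n u hn, SD.hS n _ (hn.mul (memSn_swap (by omega) hr)), mul_inv_rev, swap_inv,
    mul_assoc, SD.Dw_swap_succ_mul hv hlen]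
  rfl

theorem D_S_of_lt (hu : finSupp u) (hlt : u r < u (r + 1)) : SD.D r (SD.S u) = 0 := by
  obtain ⟨n, hn, hr⟩ := hu.exists_memSn_lt (r + 1)
  have hv : finSupp (u⁻¹ * w0 n) := (finSupp.inv ⟨n, hn⟩).mul ⟨n, memSn_w0 n⟩
  have hlen := permLength_swap_succ_mul_of_gt hv (r := r) <| by
    rw [inv_mul_w0_inv_apply hn (by omega : r < n), inv_mul_w0_inv_apply hn hr]
    have := hn.apply_lt hr
    omega
  rw [SD.hS n u hn, ← swap_mul_self_mul r (r + 1) (u⁻¹ * w0 n),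
    SD.Dw_swap_succ_mul ((finSupp_swap r (r + 1)).mul hv)
      (by rw [swap_mul_self_mul]; omega)]
  exact SD.D_D _

theorem D_S (hu : finSupp u) (r : ℕ) :
    SD.D r (SD.S u) = if u (r + 1) < u r then SD.S (u * swap r (r + 1)) else 0 := by
  split_ifs with h
  · exact SD.D_S_of_gt hu h
  · exact SD.D_S_of_lt hu ((not_lt.mp h).lt_of_ne (u.injective.ne (Nat.ne_add_one r)))

theorem D_prodXPow {N : ℕ} {f : ℕ → ℕ} (hr : r + 1 < N) (hf : f r = f (r + 1) + 1) :
    SD.D r (prodXPow N f) = prodXPow N (Function.update f r (f (r + 1))) := by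
  have hmon := prodXPow_eq_X_mul (f := f) (g := Function.update f r (f (r + 1))) (N := N)
    (r := r) (by omega) (by simp [hf]) fun p _ hp => by simp [hp]
  rw [hmon, SD.D_mul, SD.D_X_self, SD.D_eq_zero_of_rename_eq (rename_swap_succ_prodXPow hr
    (by simp)), one_mul, mul_zero, add_zero]

/-- The largest of `z a, …, z (a + d)` slides from position `a` to `a + d` through descents,
while `∂_a, …, ∂_{a+d-1}` lower the staircase-shaped exponents one at a time. -/
theorem S_mul_adjCycle {z : Perm ℕ} (hz : finSupp z)
    {a d N : ℕ} {f : ℕ → ℕ} (hN : a + d < N) (hmax : ∀ x, a < x → x ≤ a + d → z x < z a)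
    (hf : ∀ x, a ≤ x → x < a + d → f x = f (x + 1) + 1) (hS : SD.S z = prodXPow N f) :
    SD.S (z * adjCycle a d) =
      prodXPow N fun p => if a ≤ p ∧ p < a + d then f (p + 1) else f p := by
  induction d with
  | zero =>
    rw [adjCycle, mul_one, hS]
    exact prodXPow_congr fun p _ => by rw [if_neg (by omega)]
  | succ d ih =>
    have hdesc : (z * adjCycle a d) (a + d + 1) < (z * adjCycle a d) (a + d) := by
      have h₁ : adjCycle a d (a + d + 1) = a + d + 1 := by rw [adjCycle_apply]; split_ifs <;> omega
      have h₂ : adjCycle a d (a + d) = a := by rw [adjCycle_apply]; split_ifs <;> omega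
      rw [Perm.mul_apply, Perm.mul_apply, h₁, h₂]
      exact hmax _ (by omega) le_rfl
    rw [adjCycle, ← mul_assoc, ← SD.D_S_of_gt (hz.mul (finSupp_adjCycle a d)) hdesc,
      ih (by omega) (fun x hx hx' => hmax x hx (by omega)) (fun x hx hx' => hf x hx (by omega)),
      SD.D_prodXPow (by omega) (by split_ifs <;> first | omega | exact hf _ (by omega) (by omega))]
    refine prodXPow_congr fun p _ => ?_
    rcases eq_or_ne p (a + d) with rfl | hp
    · simp
    · rw [Function.update_of_ne hp]
      split_ifs <;> first | rfl | omega

theorem S_w0_mul_swap {m n : ℕ} (hm : m < n) :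
    SD.S (w0 n * swap m n) = X m * staircase n := by
  have h₀ : SD.S (w0 (n + 1)) = prodXPow (n + 1) fun p => n - p := by
    rw [SD.S_w0]
    exact prodXPow_congr fun p _ => by omega
  have h₁ := SD.S_mul_adjCycle ⟨n + 1, memSn_w0 _⟩ (a := 0) (d := m) (by omega)
    (fun x hx hx' => by simp only [w0_apply]; split_ifs <;> omega)
    (fun x _ hx' => by omega) h₀
  have h₂ := SD.S_mul_adjCycle ((finSupp.mul ⟨n + 1, memSn_w0 _⟩ (finSupp_adjCycle 0 m)))
    (a := m + 1) (d := n - 1 - m) (by omega)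
    (fun x hx hx' => by simp only [Perm.mul_apply, adjCycle_apply, w0_apply]; split_ifs <;> omega)
    (fun x hx hx' => by split_ifs <;> omega) h₁
  rw [w0_mul_swap_eq m n hm, h₂, prodXPow_succ, if_neg (by omega), if_neg (by omega), Nat.sub_self,
    pow_zero, mul_one, staircase]
  refine prodXPow_eq_X_mul hm (by split_ifs <;> omega) fun p hp hpm => ?_
  split_ifs <;> omega

/-- Monk's rule for the single variable `x_m`. -/
def TransitionFormula (w : Perm ℕ) (m : ℕ) : Prop :=
  ∀ C, IsCoverSet w m C → X m * SD.S w = ∑ c ∈ C, transSign m c • SD.S (w * swap m c)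

theorem transitionFormula_w0 (hm : m < n) : SD.TransitionFormula (w0 n) m := by
  intro C hC
  have hw0 : ∀ x < n, w0 n x = n - 1 - x := fun x hx => if_pos hx
  have hCn : C = {n} := by
    ext c
    rw [hC, mem_singleton]
    constructor
    · intro hcov
      have hcn := hcov.le_of_memSn (memSn_w0 n) hm
      rcases lt_trichotomy c m with hcm | rfl | hcm
      · have := ((bruhatCovers_iff ⟨n, memSn_w0 n⟩ hcm).mp (by rwa [BruhatCovers, swap_comm])).1
        rw [hw0 c (by omega), hw0 m hm] at this
        omega
      · exact absurd rfl hcov.ne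
      · by_contra hne
        have := ((bruhatCovers_iff ⟨n, memSn_w0 n⟩ hcm).mp hcov).1
        rw [hw0 c (by omega), hw0 m hm] at this
        omega
    · intro hc
      rw [hc]
      refine (bruhatCovers_iff ⟨n, memSn_w0 n⟩ hm).mpr ⟨?_, fun x hx hx' => ?_⟩
      · rw [hw0 m hm, (memSn_w0 n) n le_rfl]
        omega
      · rw [hw0 m hm, hw0 x hx', (memSn_w0 n) n le_rfl]
        omega
  rw [hCn, sum_singleton, transSign, if_pos hm, one_smul, SD.S_w0_mul_swap hm, SD.S_w0]

theorem sum_transSign_smul_D_S (hw : finSupp w) (hlt : w r < w (r + 1)) {C C' : Finset ℕ}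
    (hC : IsCoverSet w m C) (hC' : IsCoverSet (w * swap r (r + 1)) (swap r (r + 1) m) C') :
    ∑ c ∈ C', transSign (swap r (r + 1) m) c •
        SD.D r (SD.S (w * swap r (r + 1) * swap (swap r (r + 1) m) c)) =
      ∑ c ∈ C.erase (swap r (r + 1) m), transSign m c • SD.S (w * swap m c) := by
  classical
  simp_rw [SD.D_S ((hw.mul_swap _ _).mul_swap _ _), smul_ite, smul_zero]
  rw [← sum_filter]
  have hmap : C'.filter (fun c => (w * swap r (r + 1) * swap (swap r (r + 1) m) c) (r + 1) <
      (w * swap r (r + 1) * swap (swap r (r + 1) m) c) r) =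
      (C.erase (swap r (r + 1) m)).map (swap r (r + 1)).toEmbedding := by
    ext c
    have := bruhatCovers_mul_swap_succ_iff hw hlt (m := m) (c := swap r (r + 1) c)
    rw [swap_apply_self] at this
    rw [mem_filter, mem_map_equiv, symm_swap, mem_erase, hC', hC, this]
  rw [hmap, sum_map]
  refine sum_congr rfl fun c hc => ?_
  rw [coe_toEmbedding, transSign_swap_succ (mem_erase.mp hc).1, mul_swap_succ_mul_swap_conj,
    mul_swap_mul_self]

theorem TransitionFormula.of_mul_swap_succ (hw : finSupp w) (hlt : w r < w (r + 1))
    (h : SD.TransitionFormula (w * swap r (r + 1)) (swap r (r + 1) m)) :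
    SD.TransitionFormula w m := by
  intro C hC
  obtain ⟨C', hC'⟩ := exists_isCoverSet (hw.mul_swap r (r + 1)) (swap r (r + 1) m)
  have hD := congrArg (SD.D r) (h C' hC')
  rw [SD.D_mul, rename_X, swap_apply_self,
    SD.D_S_of_gt (hw.mul_swap r (r + 1)) (by simpa using hlt), mul_swap_mul_self, SD.D_sum] at hD
  simp only [SD.D_zsmul] at hD
  rw [SD.sum_transSign_smul_D_S hw hlt hC hC'] at hD
  by_cases hsm : swap r (r + 1) m = m
  · have hm : m ≠ r ∧ m ≠ r + 1 := by
      constructor <;> rintro rfl <;> simp at hsm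
    rw [hsm, SD.D_X_of_ne hm.1 hm.2, zero_mul, zero_add,
      erase_eq_of_notMem fun h => ((hC m).mp h).ne rfl] at hD
    exact hD
  · have hmem : swap r (r + 1) m ∈ C := (hC _).mpr <| by
      rw [BruhatCovers, swap_apply_swap_succ_of_ne hsm, permLength_mul_swap_succ_of_lt hw hlt]
    rw [← add_sum_erase C _ hmem, swap_apply_swap_succ_of_ne hsm]
    obtain rfl | rfl : m = r ∨ m = r + 1 := by
      by_contra! hm
      exact hsm (swap_apply_of_ne_of_ne hm.1 hm.2)
    · simp only [swap_apply_left, SD.D_X_succ, transSign, if_pos (Nat.lt_succ_self m),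
        one_smul] at hD ⊢
      linear_combination hD
    · simp only [swap_apply_right, SD.D_X_self, transSign, if_neg (by omega : ¬r + 1 < r),
        neg_smul, one_smul, one_mul] at hD ⊢
      linear_combination hD

theorem transitionFormula_of_memSn {n m : ℕ} {w : Perm ℕ} (hw : memSn n w) (hm : m < n) :
    SD.TransitionFormula w m := by
  by_cases hw0 : w = w0 n
  · exact hw0 ▸ SD.transitionFormula_w0 hm
  obtain ⟨r, hr, hlt⟩ := exists_apply_lt_apply_succ_of_ne_w0 hw hw0
  have hu : memSn n (w * swap r (r + 1)) := hw.mul (memSn_swap (by omega) hr)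
  have hlen := permLength_mul_swap_succ_of_lt ⟨n, hw⟩ hlt
  have := permLength_le hu
  exact TransitionFormula.of_mul_swap_succ SD ⟨n, hw⟩ hlt
    (transitionFormula_of_memSn hu (by rw [swap_apply_def]; split_ifs <;> omega))
termination_by n * n - permLength w

theorem transitionFormula (hw : finSupp w) (m : ℕ) : SD.TransitionFormula w m :=
  let ⟨_, hn, hm⟩ := hw.exists_memSn_lt m
  SD.transitionFormula_of_memSn hn hm

theorem X_zero_eq_S_swap : X 0 = SD.S (swap 0 1) := by
  have := SD.transitionFormula ⟨0, fun _ _ => rfl⟩ 0 {1} fun c => by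
    rw [mem_singleton, bruhatCovers_one_iff]
    omega
  rwa [SD.S_one, mul_one, sum_singleton, transSign, if_pos one_pos, one_smul, one_mul] at this

theorem X_succ_eq_S_swap_sub (k : ℕ) :
    X (k + 1) = SD.S (swap (k + 1) (k + 2)) - SD.S (swap k (k + 1)) := by
  have := SD.transitionFormula ⟨0, fun _ _ => rfl⟩ (k + 1) {k + 2, k} fun c => by
    rw [mem_insert, mem_singleton, bruhatCovers_one_iff]
    omega
  rw [SD.S_one, mul_one, sum_pair (by omega), transSign, transSign, if_pos (by omega),
    if_neg (by omega), one_mul, one_mul, swap_comm (k + 1) k] at this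
  rw [this, one_smul, neg_smul, one_smul, sub_eq_add_neg]

theorem S_swap_succ (k : ℕ) : SD.S (swap k (k + 1)) = ∑ i ∈ range (k + 1), X i := by
  induction k with
  | zero => rw [sum_range_one, SD.X_zero_eq_S_swap]
  | succ k ih => rw [sum_range_succ, ← ih, SD.X_succ_eq_S_swap_sub, add_sub_cancel]

end SchubertData

/-- Monk's formula. For the simple transposition `s_k` (written 0-indexed as
`swap k (k+1)`) and any `w ∈ S_∞`, one has `𝔖_{s_k} = X_1 + ⋯ + X_k` (0-indexed:
`X 0 + ⋯ + X k`) and `𝔖_{s_k} ⋅ 𝔖_w = ∑_t 𝔖_{wt}`, the sum over all transpositions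
`t = (i, j)` with `i ≤ k < j` and `l(wt) = l(w) + 1`. -/
theorem monk_formula (SD : SchubertData) (k : ℕ) (w : Equiv.Perm ℕ) (hfin : finSupp w)
    (T : Finset (ℕ × ℕ))
    (hT : ∀ p : ℕ × ℕ, p ∈ T ↔ p.1 ≤ k ∧ k < p.2 ∧
      permLength (w * Equiv.swap p.1 p.2) = permLength w + 1) :
    SD.S (Equiv.swap k (k + 1)) = ∑ i ∈ Finset.range (k + 1), X i ∧
    SD.S (Equiv.swap k (k + 1)) * SD.S w = ∑ p ∈ T, SD.S (w * Equiv.swap p.1 p.2) := by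
  refine ⟨SD.S_swap_succ k, ?_⟩
  choose C hC using exists_isCoverSet hfin
  calc SD.S (swap k (k + 1)) * SD.S w = ∑ m ∈ range (k + 1), X m * SD.S w := by
        rw [SD.S_swap_succ, sum_mul]
    _ = ∑ m ∈ range (k + 1), ∑ c ∈ C m, transSign m c • SD.S (w * swap m c) :=
        sum_congr rfl fun m _ => SD.transitionFormula hfin m (C m) (hC m)
    _ = ∑ p ∈ T, SD.S (w * swap p.1 p.2) :=
        sum_range_sum_transSign_smul (Q := BruhatCovers w)
          (fun a b h => by rwa [BruhatCovers, swap_comm]) (fun a b h => h.ne)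
          (fun a b => by rw [swap_comm]) hC hT
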